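/- Let α, β ∈ (0,1), let w ∈ ℂ with w ≠ 0, and let t_α, t_β ∈ ℂ be nonzero with t_α² = w(w+α²)(1+α²w) and t_β² = w(w+β²)(1+β²w). Then 2·F_{β,1}(w;t_β)·F_{α,1}(w;t_α) = (1 + 2g_{α,β}(w))·F_{β,1}(w;t_β) + 2·F_{β,1}(w;t_β)·F_{α,1}(w;t_α)·F_{β,2}(w;t_β). -/
import Mathlib


open Matrix Complex

/-- `F_{ε,1}(z;t)`. -/
noncomputable def F1 (ε : ℝ) (z t : ℂ) : Matrix (Fin 2) (Fin 2) ℂ :=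
  !![1/2 - z * ((ε : ℂ)^2 - 1) / (2 * t), -((ε : ℂ)^2 * (z + 1)) / (2 * t);
     -(z * (z + 1)) / (2 * t), 1/2 + z * ((ε : ℂ)^2 - 1) / (2 * t)]

/-- `F_{ε,2}(z;t)`. -/
noncomputable def F2 (ε : ℝ) (z t : ℂ) : Matrix (Fin 2) (Fin 2) ℂ :=
  !![1/2 + z * ((ε : ℂ)^2 - 1) / (2 * t), (ε : ℂ)^2 * (z + 1) / (2 * t);
     z * (z + 1) / (2 * t), 1/2 - z * ((ε : ℂ)^2 - 1) / (2 * t)]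

/-- `g_{α,β}(w) = w(2w(1+α²β²)+β²(w²+1)+α²(w²+1))/(4·t_α·t_β)`, with a coherent branch
choice of the square roots `t_α`, `t_β`. -/
noncomputable def gf (α β : ℝ) (w tα tβ : ℂ) : ℂ :=
  w * (2 * w * (1 + (α : ℂ)^2 * (β : ℂ)^2) + (β : ℂ)^2 * (w^2 + 1) + (α : ℂ)^2 * (w^2 + 1))
    / (4 * tα * tβ)

/-- Rank-one identity: if `det P = 0` for a 2×2 matrix, then `P M P = tr(P M) • P`. -/
lemma rank_one_sandwich (P M : Matrix (Fin 2) (Fin 2) ℂ) (h : P.det = 0) :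
    P * M * P = (P * M).trace • P := by
  have h2 : P 0 0 * P 1 1 - P 0 1 * P 1 0 = 0 := by
    rw [← Matrix.det_fin_two]; exact h
  ext i j
  fin_cases i <;> fin_cases j <;>
    simp [Matrix.mul_apply, Matrix.trace, Matrix.diag, Fin.sum_univ_two, Matrix.smul_apply,
      smul_eq_mul]
  · linear_combination (-(M 1 1)) * h2
  · linear_combination M 0 1 * h2
  · linear_combination M 1 0 * h2
  · linear_combination (-(M 0 0)) * h2

lemma detF1 (ε : ℝ) (z t : ℂ) (ht0 : t ≠ 0)
    (ht : t ^ 2 = z * (z + (ε : ℂ)^2) * (1 + (ε : ℂ)^2 * z)) :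
    (F1 ε z t).det = 0 := by
  simp only [F1, Matrix.det_fin_two_of]
  field_simp
  linear_combination ht

lemma F2_eq (ε : ℝ) (z t : ℂ) : F2 ε z t = 1 - F1 ε z t := by
  ext i j
  fin_cases i <;> fin_cases j <;>
    simp [F1, F2, Matrix.one_apply] <;> ring

lemma trace_F1_mul (α β : ℝ) (w tα tβ : ℂ) (htα0 : tα ≠ 0) (htβ0 : tβ ≠ 0) :
    (F1 β w tβ * F1 α w tα).trace = 1/2 + gf α β w tα tβ := by
  simp only [F1, gf, Matrix.trace, Matrix.diag, Fin.sum_univ_two, Matrix.mul_apply,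
    Matrix.cons_val', Matrix.cons_val_zero, Matrix.cons_val_one, Matrix.head_cons,
    Matrix.head_fin_const, Matrix.empty_val', Matrix.cons_val_fin_one, Matrix.of_apply]
  field_simp
  ring

/-- `2·F_{β,1}(w)·F_{α,1}(w) = (1 + 2g_{α,β}(w))·F_{β,1}(w) + 2·F_{β,1}(w)·F_{α,1}(w)·F_{β,2}(w)`. -/
theorem stmt5 (α β : ℝ) (hα : α ∈ Set.Ioo (0 : ℝ) 1) (hβ : β ∈ Set.Ioo (0 : ℝ) 1)
    (w : ℂ) (hw : w ≠ 0) (tα tβ : ℂ) (htα0 : tα ≠ 0) (htβ0 : tβ ≠ 0)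
    (htα : tα^2 = w * (w + (α : ℂ)^2) * (1 + (α : ℂ)^2 * w))
    (htβ : tβ^2 = w * (w + (β : ℂ)^2) * (1 + (β : ℂ)^2 * w)) :
    (2 : ℂ) • (F1 β w tβ * F1 α w tα)
      = (1 + 2 * gf α β w tα tβ) • F1 β w tβ
        + (2 : ℂ) • (F1 β w tβ * F1 α w tα * F2 β w tβ) := by
  have hdet := detF1 β w tβ htβ0 htβ
  have hsand := rank_one_sandwich (F1 β w tβ) (F1 α w tα) hdet
  have htr := trace_F1_mul α β w tα tβ htα0 htβ0
  rw [F2_eq]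
  rw [mul_sub, mul_one, hsand, htr]
  rw [smul_sub]
  module
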